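/- arXiv:2305.09245 — 9 statements merged into one kernel-verified Lean document; each statement's English description precedes it below -/
import Mathlib

section
/- Let V be a finite set of vertices, each vertex v having an open uncertainty interval I_v = (L_v, U_v) ⊆ ℝ and a precise weight w_v ∈ I_v. Let S ⊆ V be a hyperedge. If v ∈ S is a vertex of minimum weight in S and there exists u ∈ S \ {v} with w_u ∈ I_v, then every query set Q ⊆ V that allows determining a minimum-weight vertex of S (i.e., after replacing I_q by {w_q} for all q ∈ Q, some vertex of S has an interval lying weakly below all other intervals of S) must contain v. -/
open Finset

/-- Lower endpoint of vertex `v`'s interval after querying the set `Q`. -/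
def qlo {V : Type*} [DecidableEq V] (L w : V → ℝ) (Q : Finset V) (v : V) : ℝ :=
  if v ∈ Q then w v else L v

/-- Upper endpoint of vertex `v`'s interval after querying the set `Q`. -/
def qhi {V : Type*} [DecidableEq V] (U w : V → ℝ) (Q : Finset V) (v : V) : ℝ :=
  if v ∈ Q then w v else U v

/-- The query set `Q` suffices to orient the hyperedge `S`: some vertex of `S`
has its (updated) interval weakly below all other (updated) intervals of `S`. -/
def Solves {V : Type*} [DecidableEq V] (L U w : V → ℝ) (Q : Finset V) (S : Finset V) : Prop :=
  ∃ m ∈ S, ∀ u ∈ S, u ≠ m → qhi U w Q m ≤ qlo L w Q u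

/-! If `v` is not queried, its interval stays `(L v, U v)`. It cannot be the certified minimum,
since the other vertex `u` has `qlo u ≤ w u < U v`; and no other vertex `m` can be, since
`qhi m ≥ w m ≥ w v > L v`. -/

section QueriedEndpoints

variable {V : Type*} [DecidableEq V] {Q : Finset V} {x : V}

lemma qlo_of_notMem (L w : V → ℝ) (hx : x ∉ Q) : qlo L w Q x = L x := by
  simp [qlo, hx]

lemma qhi_of_notMem (U w : V → ℝ) (hx : x ∉ Q) : qhi U w Q x = U x := by
  simp [qhi, hx]

lemma qlo_le {L w : V → ℝ} (h : L x ≤ w x) : qlo L w Q x ≤ w x := by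
  unfold qlo
  split_ifs
  exacts [le_rfl, h]

lemma le_qhi {U w : V → ℝ} (h : w x ≤ U x) : w x ≤ qhi U w Q x := by
  unfold qhi
  split_ifs
  exacts [le_rfl, h]

end QueriedEndpoints

theorem stmt0 {V : Type*} [DecidableEq V] (L U w : V → ℝ)
    (hw : ∀ x : V, w x ∈ Set.Ioo (L x) (U x))
    (S : Finset V) (v : V) (hvS : v ∈ S)
    (hmin : ∀ x ∈ S, w v ≤ w x)
    (hu : ∃ u ∈ S, u ≠ v ∧ w u ∈ Set.Ioo (L v) (U v)) :
    ∀ Q : Finset V, Solves L U w Q S → v ∈ Q := by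
  rintro Q ⟨m, hmS, hm⟩
  by_contra hvQ
  obtain ⟨u, huS, huv, -, hwu⟩ := hu
  by_cases hmv : m = v
  · subst hmv
    have : U m ≤ w u := calc
      U m = qhi U w Q m := (qhi_of_notMem U w hvQ).symm
      _ ≤ qlo L w Q u := hm u huS huv
      _ ≤ w u := qlo_le (hw u).1.le
    linarith
  · have : w v ≤ L v := calc
      w v ≤ w m := hmin m hmS
      _ ≤ qhi U w Q m := le_qhi (hw m).2.le
      _ ≤ qlo L w Q v := hm v hvS (Ne.symm hmv)
      _ = L v := qlo_of_notMem L w hvQ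
    linarith [(hw v).1]
end

section
/- Let V be a finite set of vertices with open intervals I_v and weights w_v ∈ I_v, and let S be a hyperedge with |S| ≥ 2 in which v has a non-trivial interval. If for every hyperedge S containing v, either (a) v is a minimum-weight vertex of S and w_u ∉ I_v for all u ∈ S \ {v}, or (b) v is not minimum-weight in S and the minimum weight of S is not in I_v, then V \ {v} is a feasible query set, i.e., v is not mandatory. -/
/-!
Once every vertex except `v` is queried, a hyperedge avoiding `v` is oriented by its
minimum-weight vertex. In case (a) the interval of `v` lies below every other weight of the
hyperedge (those weights exceed `w v > L v` and avoid `I_v`), so `v` orients it; in case (b)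
the minimum weight is at most `w v < U v` and avoids `I_v`, so it lies below `I_v` and the
minimum-weight vertex orients the hyperedge.
-/

open Finset

section Solves

variable {V : Type*} [DecidableEq V] {L U w : V → ℝ} {Q S : Finset V} {m : V}

theorem solves_of_queried_min (hm : m ∈ S) (hmQ : m ∈ Q) (hmin : ∀ u ∈ S, w m ≤ w u)
    (hlo : ∀ u ∈ S, u ∉ Q → w m ≤ L u) : Solves L U w Q S := by
  refine ⟨m, hm, fun u hu _ => ?_⟩
  by_cases huQ : u ∈ Q
  · simpa only [qhi, qlo, if_pos hmQ, if_pos huQ] using hmin u hu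
  · simpa only [qhi, qlo, if_pos hmQ, if_neg huQ] using hlo u hu huQ

theorem solves_of_unqueried_below (hm : m ∈ S) (hmQ : m ∉ Q)
    (hbelow : ∀ u ∈ S, u ≠ m → u ∈ Q ∧ U m ≤ w u) : Solves L U w Q S := by
  refine ⟨m, hm, fun u hu hne => ?_⟩
  obtain ⟨huQ, hle⟩ := hbelow u hu hne
  simpa only [qhi, qlo, if_neg hmQ, if_pos huQ] using hle

end Solves

theorem stmt2_general {V : Type*} [Fintype V] [DecidableEq V] (L U w : V → ℝ)
    (hw : ∀ x : V, w x ∈ Set.Ioo (L x) (U x))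
    (E : Finset (Finset V)) (v : V)
    (hcard : ∀ S ∈ E, 2 ≤ S.card)
    (hcase : ∀ S ∈ E, v ∈ S →
      ((∀ x ∈ S, w v ≤ w x) ∧ ∀ u ∈ S, u ≠ v → w u ∉ Set.Ioo (L v) (U v)) ∨
      ((∃ u ∈ S, w u < w v) ∧
        ∀ u ∈ S, (∀ x ∈ S, w u ≤ w x) → w u ∉ Set.Ioo (L v) (U v))) :
    ∀ S ∈ E, Solves L U w (Finset.univ.erase v) S := by
  have hQ : ∀ u, u ≠ v → u ∈ univ.erase v := fun u hu => mem_erase.2 ⟨hu, mem_univ u⟩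
  intro S hS
  obtain ⟨m, hm, hmin⟩ := S.exists_min_image w (card_pos.mp (by linarith [hcard S hS]))
  by_cases hvS : v ∈ S
  · rcases hcase S hS hvS with ⟨hvmin, hout⟩ | ⟨⟨u₀, hu₀, hlt⟩, hout⟩
    · refine solves_of_unqueried_below hvS (by simp) fun u hu hne => ⟨hQ u hne, ?_⟩
      exact not_lt.1 fun h => hout u hu hne ⟨(hw v).1.trans_le (hvmin u hu), h⟩
    · have hmv : m ≠ v := by rintro rfl; exact (hmin u₀ hu₀).not_gt hlt
      refine solves_of_queried_min hm (hQ m hmv) hmin fun u _ huQ => ?_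
      obtain rfl : u = v := by simpa using huQ
      exact not_lt.1 fun h => hout m hm hmin ⟨h, (hmin u hvS).trans_lt (hw u).2⟩
  · have hmv : m ≠ v := by rintro rfl; exact hvS hm
    refine solves_of_queried_min hm (hQ m hmv) hmin fun u hu huQ => ?_
    obtain rfl : u = v := by simpa using huQ
    exact absurd hu hvS

theorem stmt2 {V : Type*} [Fintype V] [DecidableEq V] (L U w : V → ℝ)
    (hw : ∀ x : V, w x ∈ Set.Ioo (L x) (U x))
    (E : Finset (Finset V)) (v : V)
    (hnontriv : L v < U v)
    (hcard : ∀ S ∈ E, 2 ≤ S.card)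
    (hcase : ∀ S ∈ E, v ∈ S →
      ((∀ x ∈ S, w v ≤ w x) ∧ ∀ u ∈ S, u ≠ v → w u ∉ Set.Ioo (L v) (U v)) ∨
      ((∃ u ∈ S, w u < w v) ∧
        ∀ u ∈ S, (∀ x ∈ S, w u ≤ w x) → w u ∉ Set.Ioo (L v) (U v))) :
    ∀ S ∈ E, Solves L U w (Finset.univ.erase v) S :=
  stmt2_general L U w hw E v hcard hcase
end

section
/- Consider a set of vertices V with open intervals I_v, true weights w_v ∈ I_v, and predicted weights ŵ_v ∈ I_v, and a hypergraph H = (V,E). Let 𝓘_P be the set of vertices that are mandatory when the weights are ŵ, and 𝓘_R the set of vertices mandatory when the weights are w. Define the hop distance k_h = Σ_{v∈V} |{u ∈ V \ {v} : the relation of w_v to the interval I_u differs from the relation of ŵ_v to I_u, i.e., exactly one of w_v, ŵ_v is ≤ L_u, or exactly one is ≥ U_u}|. Then the mandatory query distance k_M = |𝓘_P △ 𝓘_R| satisfies k_M ≤ k_h. -/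
open Finset

/-- A vertex is mandatory (for weights `w`) if it belongs to every query set
that orients all hyperedges of `E`. -/
def Mandatory {V : Type*} [DecidableEq V] (L U w : V → ℝ) (E : Finset (Finset V)) (v : V) : Prop :=
  ∀ Q : Finset V, (∀ S ∈ E, Solves L U w Q S) → v ∈ Q

/-!
Querying more never hurts, so `v` is mandatory exactly when the largest query set avoiding `v`,
namely `{v}ᶜ`, fails on some hyperedge `S`. Under `{v}ᶜ` every vertex other than `v` is a point,
and `S ∋ v` is oriented iff either `U v` lies below all other points of `S` or some other point
lies below `L v`. So if this fails for one weight vector and succeeds for the other, some vertex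
`m ≠ v` has moved across `L v` or `U v`: the change in `v`'s mandatory status is charged to a hop
of `m` over an endpoint of `I_v`, and distinct `v` are charged to distinct pairs `(m, v)`.
-/

section Queries

variable {V : Type*} [DecidableEq V]

section Monotone

variable {L U w : V → ℝ} {Q Q' : Finset V}

lemma qhi_le_qhi_of_subset (hwU : ∀ x, w x ≤ U x) (h : Q ⊆ Q') (v : V) :
    qhi U w Q' v ≤ qhi U w Q v := by
  unfold qhi
  by_cases hv : v ∈ Q
  · rw [if_pos hv, if_pos (h hv)]
  · rw [if_neg hv]
    split_ifs
    exacts [hwU v, le_rfl]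

lemma qlo_le_qlo_of_subset (hLw : ∀ x, L x ≤ w x) (h : Q ⊆ Q') (v : V) :
    qlo L w Q v ≤ qlo L w Q' v := by
  unfold qlo
  by_cases hv : v ∈ Q
  · rw [if_pos hv, if_pos (h hv)]
  · rw [if_neg hv]
    split_ifs
    exacts [hLw v, le_rfl]

lemma Solves.mono (hw : ∀ x, w x ∈ Set.Icc (L x) (U x)) (h : Q ⊆ Q') {S : Finset V}
    (hS : Solves L U w Q S) : Solves L U w Q' S := by
  obtain ⟨m, hm, hmin⟩ := hS
  exact ⟨m, hm, fun u hu hum =>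
    (qhi_le_qhi_of_subset (fun x => (hw x).2) h m).trans <|
      (hmin u hu hum).trans (qlo_le_qlo_of_subset (fun x => (hw x).1) h u)⟩

end Monotone

section Complement

variable [Fintype V] {L U a b : V → ℝ} {v : V} {S : Finset V}

@[simp] lemma qhi_compl_singleton_self : qhi U a {v}ᶜ v = U v := by simp [qhi]

@[simp] lemma qlo_compl_singleton_self : qlo L a {v}ᶜ v = L v := by simp [qlo]

@[simp] lemma qhi_compl_singleton_of_ne {x : V} (hx : x ≠ v) : qhi U a {v}ᶜ x = a x := by
  simp [qhi, hx]

@[simp] lemma qlo_compl_singleton_of_ne {x : V} (hx : x ≠ v) : qlo L a {v}ᶜ x = a x := by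
  simp [qlo, hx]

lemma mandatory_iff_exists_not_solves_compl (hw : ∀ x, a x ∈ Set.Icc (L x) (U x))
    (E : Finset (Finset V)) (v : V) :
    Mandatory L U a E v ↔ ∃ S ∈ E, ¬ Solves L U a {v}ᶜ S := by
  constructor
  · intro hv
    by_contra! h
    simpa using hv {v}ᶜ h
  · rintro ⟨S, hS, hns⟩ Q hQ
    by_contra hv
    exact hns ((hQ S hS).mono hw (subset_compl_singleton.2 hv))

lemma solves_compl_of_notMem (hS : S.Nonempty) (hv : v ∉ S) : Solves L U a {v}ᶜ S := by
  obtain ⟨m, hm, hmin⟩ := S.exists_min_image a hS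
  refine ⟨m, hm, fun u hu _ => ?_⟩
  rw [qhi_compl_singleton_of_ne (ne_of_mem_of_not_mem hm hv),
    qlo_compl_singleton_of_ne (ne_of_mem_of_not_mem hu hv)]
  exact hmin u hu

lemma solves_compl_iff (hv : v ∈ S) :
    Solves L U a {v}ᶜ S ↔ (∀ u ∈ S.erase v, U v ≤ a u) ∨ ∃ u ∈ S.erase v, a u ≤ L v := by
  constructor
  · rintro ⟨m, hm, hmin⟩
    by_cases hmv : m = v
    · subst hmv
      exact Or.inl fun u hu => by
        simpa [ne_of_mem_erase hu] using hmin u (mem_of_mem_erase hu) (ne_of_mem_erase hu)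
    · exact Or.inr ⟨m, mem_erase.2 ⟨hmv, hm⟩, by simpa [hmv] using hmin v hv (Ne.symm hmv)⟩
  · rintro (hU | ⟨u, hu, hL⟩)
    · exact ⟨v, hv, fun u hu huv => by simpa [huv] using hU u (mem_erase.2 ⟨huv, hu⟩)⟩
    · obtain ⟨m, hm, hmin⟩ := (S.erase v).exists_min_image a ⟨u, hu⟩
      refine ⟨m, mem_of_mem_erase hm, fun x hx hxm => ?_⟩
      rw [qhi_compl_singleton_of_ne (ne_of_mem_erase hm)]
      by_cases hxv : x = v
      · subst hxv
        simpa using (hmin u hu).trans hL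
      · simpa [hxv] using hmin x (mem_erase.2 ⟨hxv, hx⟩)

lemma exists_hop_of_not_solves_of_solves (ha : ¬ Solves L U a {v}ᶜ S)
    (hb : Solves L U b {v}ᶜ S) :
    ∃ m, m ≠ v ∧ ((b m ≤ L v ∧ L v < a m) ∨ (a m < U v ∧ U v ≤ b m)) := by
  have hv : v ∈ S := by
    obtain ⟨m, hm, -⟩ := hb
    by_contra hv
    exact ha (solves_compl_of_notMem ⟨m, hm⟩ hv)
  rw [solves_compl_iff hv] at ha hb
  push Not at ha
  obtain ⟨⟨u, hu, haU⟩, haL⟩ := ha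
  rcases hb with hbU | ⟨m, hm, hbL⟩
  · exact ⟨u, ne_of_mem_erase hu, Or.inr ⟨haU, hbU u hu⟩⟩
  · exact ⟨m, ne_of_mem_erase hm, Or.inl ⟨hbL, haL m hm⟩⟩

lemma exists_hop_of_mandatory_of_not_mandatory (ha : ∀ x, a x ∈ Set.Icc (L x) (U x))
    (hb : ∀ x, b x ∈ Set.Icc (L x) (U x)) {E : Finset (Finset V)}
    (hma : Mandatory L U a E v) (hmb : ¬ Mandatory L U b E v) :
    ∃ m, m ≠ v ∧ ((b m ≤ L v ∧ L v < a m) ∨ (a m < U v ∧ U v ≤ b m)) := by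
  obtain ⟨S, hS, hns⟩ := (mandatory_iff_exists_not_solves_compl ha E v).1 hma
  rw [mandatory_iff_exists_not_solves_compl hb E v] at hmb
  push Not at hmb
  exact exists_hop_of_not_solves_of_solves hns (hmb S hS)

end Complement

end Queries

open scoped Classical in
/-- The mandatory query distance is at most the hop distance. -/
theorem stmt3 {V : Type*} [Fintype V] [DecidableEq V] (L U w pw : V → ℝ)
    (hw : ∀ x : V, w x ∈ Set.Ioo (L x) (U x))
    (hpw : ∀ x : V, pw x ∈ Set.Ioo (L x) (U x))
    (E : Finset (Finset V)) :
    (symmDiff (Finset.univ.filter (Mandatory L U pw E))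
              (Finset.univ.filter (Mandatory L U w E))).card ≤
      ∑ v : V, (Finset.univ.filter (fun u : V => u ≠ v ∧
        ((pw v ≤ L u ∧ L u < w v) ∨ (w v ≤ L u ∧ L u < pw v) ∨
         (w v < U u ∧ U u ≤ pw v) ∨ (pw v < U u ∧ U u ≤ w v)))).card := by
  have hw' := fun x => Set.Ioo_subset_Icc_self (hw x)
  have hpw' := fun x => Set.Ioo_subset_Icc_self (hpw x)
  refine (card_le_card fun x hx => ?_).trans card_biUnion_le
  simp only [mem_biUnion, mem_univ, mem_filter, true_and]
  rcases mem_symmDiff.1 hx with ⟨hmp, hnw⟩ | ⟨hmw, hnp⟩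
  · obtain ⟨m, hmx, hop⟩ := exists_hop_of_mandatory_of_not_mandatory hpw' hw'
      (mem_filter.1 hmp).2 (fun h => hnw (mem_filter.2 ⟨mem_univ x, h⟩))
    exact ⟨m, hmx.symm, by tauto⟩
  · obtain ⟨m, hmx, hop⟩ := exists_hop_of_mandatory_of_not_mandatory hw' hpw'
      (mem_filter.1 hmw).2 (fun h => hnp (mem_filter.2 ⟨mem_univ x, h⟩))
    exact ⟨m, hmx.symm, by tauto⟩
end

section
/- Let 𝓘 be a finite set of open real intervals such that no interval contains the predicted weight of another: for all distinct u, v, the predicted point ŵ_u ∉ I_v. Then no interval of 𝓘 is contained in another, and the intersection graph of 𝓘 contains no triangle. -/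
/-!
Each interval contains its own predicted point but no other, so no interval can contain another.
For a triangle `a, b, c`, let `b` be the one whose predicted point lies between the other two.
Then `ŵ_b` lies to the right of `L_a` and to the left of `U_c` yet in neither interval, so it
separates `I_a` (which ends before it) from `I_c` (which starts after it).
-/

open Set

lemma Set.disjoint_Ioo_of_lt_of_notMem {α : Type*} [LinearOrder α] {a₁ b₁ a₂ b₂ x : α}
    (h₁ : a₁ < x) (h₂ : x < b₂) (hx₁ : x ∉ Ioo a₁ b₁) (hx₂ : x ∉ Ioo a₂ b₂) :
    Disjoint (Ioo a₁ b₁) (Ioo a₂ b₂) := by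
  have hb₁ : b₁ ≤ x := not_lt.1 fun h => hx₁ ⟨h₁, h⟩
  have ha₂ : x ≤ a₂ := not_lt.1 fun h => hx₂ ⟨h, h₂⟩
  exact disjoint_left.2 fun y hy hy' => (hy.2.trans_le (hb₁.trans ha₂)).not_gt hy'.1

lemma Set.mem_uIcc_or_mem_uIcc_or_mem_uIcc {α : Type*} [LinearOrder α] (x y z : α) :
    x ∈ uIcc y z ∨ y ∈ uIcc x z ∨ z ∈ uIcc x y := by
  simp only [mem_uIcc]
  rcases le_total x y with h | h <;> rcases le_total y z with h' | h' <;>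
    rcases le_total x z with h'' | h'' <;> tauto

section PredictedPoints

variable {ι α : Type*} [LinearOrder α] {L U w : ι → α}

lemma disjoint_Ioo_of_mem_uIcc (hw : ∀ v, w v ∈ Ioo (L v) (U v))
    (hfree : ∀ u v, u ≠ v → w u ∉ Ioo (L v) (U v)) {a b c : ι} (hba : b ≠ a) (hbc : b ≠ c)
    (hb : w b ∈ uIcc (w a) (w c)) : Disjoint (Ioo (L a) (U a)) (Ioo (L c) (U c)) := by
  wlog hac : w a ≤ w c generalizing a c
  · exact (this hbc hba (uIcc_comm (w a) (w c) ▸ hb) (le_of_not_ge hac)).symm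
  rw [uIcc_of_le hac] at hb
  exact disjoint_Ioo_of_lt_of_notMem ((hw a).1.trans_le hb.1) (hb.2.trans_lt (hw c).2)
    (hfree b a hba) (hfree b c hbc)

end PredictedPoints

theorem stmt4_general {ι : Type*} (L U pw : ι → ℝ)
    (hpw : ∀ v : ι, pw v ∈ Set.Ioo (L v) (U v))
    (hfree : ∀ u v : ι, u ≠ v → pw u ∉ Set.Ioo (L v) (U v)) :
    (∀ u v : ι, u ≠ v → ¬ (Set.Ioo (L u) (U u) ⊆ Set.Ioo (L v) (U v))) ∧
    ¬ ∃ a b c : ι, a ≠ b ∧ a ≠ c ∧ b ≠ c ∧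
      (Set.Ioo (L a) (U a) ∩ Set.Ioo (L b) (U b)).Nonempty ∧
      (Set.Ioo (L a) (U a) ∩ Set.Ioo (L c) (U c)).Nonempty ∧
      (Set.Ioo (L b) (U b) ∩ Set.Ioo (L c) (U c)).Nonempty := by
  refine ⟨fun u v huv hsub => hfree u v huv (hsub (hpw u)), ?_⟩
  rintro ⟨a, b, c, hab, hac, hbc, hIab, hIac, hIbc⟩
  rcases mem_uIcc_or_mem_uIcc_or_mem_uIcc (pw a) (pw b) (pw c) with h | h | h
  · exact hIbc.not_disjoint (disjoint_Ioo_of_mem_uIcc hpw hfree hab hac h)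
  · exact hIac.not_disjoint (disjoint_Ioo_of_mem_uIcc hpw hfree hab.symm hbc h)
  · exact hIab.not_disjoint (disjoint_Ioo_of_mem_uIcc hpw hfree hac.symm hbc.symm h)

theorem stmt4 {ι : Type*} [Fintype ι] (L U pw : ι → ℝ)
    (hpw : ∀ v : ι, pw v ∈ Set.Ioo (L v) (U v))
    (hfree : ∀ u v : ι, u ≠ v → pw u ∉ Set.Ioo (L v) (U v)) :
    (∀ u v : ι, u ≠ v → ¬ (Set.Ioo (L u) (U u) ⊆ Set.Ioo (L v) (U v))) ∧
    ¬ ∃ a b c : ι, a ≠ b ∧ a ≠ c ∧ b ≠ c ∧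
      (Set.Ioo (L a) (U a) ∩ Set.Ioo (L b) (U b)).Nonempty ∧
      (Set.Ioo (L a) (U a) ∩ Set.Ioo (L c) (U c)).Nonempty ∧
      (Set.Ioo (L b) (U b) ∩ Set.Ioo (L c) (U c)).Nonempty :=
  stmt4_general L U pw hpw hfree
end

section
/- Let 𝓘 be a finite set of open real intervals, each I_v with a designated point ŵ_v ∈ I_v, such that for all distinct u, v we have ŵ_u ∉ I_v. Then every connected component of the intersection graph of 𝓘 is a path (possibly a single vertex), i.e., every vertex has degree at most 2 and no component contains a cycle. -/
/-!
No point `pw u` lies in another interval, so if `u` is adjacent to `v` and `pw u < pw v`, then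
`pw u ≤ L v`. Two distinct such lower neighbours `a`, `b` of `v` both reach beyond `L v`, so each
point lies left of the other interval: `pw a ≤ L b < pw b ≤ L a < pw a`. Hence every vertex has at
most one neighbour with smaller point and (reflecting the line) at most one with larger point, so
degrees are at most 2; and the vertex of a cycle with the largest point would have two lower
neighbours on the cycle.
-/

open Set OrderDual

namespace SimpleGraph

variable {V β : Type*} [LinearOrder β] {G : SimpleGraph V} (f : V → β)

lemma ncard_neighborSet_le_two_of_subsingleton (hne : ∀ ⦃u v⦄, G.Adj u v → f u ≠ f v)
    (hlt : ∀ v, {u | G.Adj v u ∧ f u < f v}.Subsingleton)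
    (hgt : ∀ v, {u | G.Adj v u ∧ f v < f u}.Subsingleton) (v : V) :
    (G.neighborSet v).ncard ≤ 2 := by
  set below := {u | G.Adj v u ∧ f u < f v}
  set above := {u | G.Adj v u ∧ f v < f u}
  have hsplit : G.neighborSet v ⊆ below ∪ above := fun u hu =>
    (hne hu).symm.lt_or_gt.imp (⟨hu, ·⟩) (⟨hu, ·⟩)
  calc (G.neighborSet v).ncard ≤ (below ∪ above).ncard :=
        ncard_le_ncard hsplit ((hlt v).finite.union (hgt v).finite)
    _ ≤ below.ncard + above.ncard := ncard_union_le _ _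
    _ ≤ 1 + 1 := add_le_add ((ncard_le_one (hlt v).finite).mpr fun _ ha _ hb => hlt v ha hb)
        ((ncard_le_one (hgt v).finite).mpr fun _ ha _ hb => hgt v ha hb)

lemma isAcyclic_of_subsingleton_lower (hne : ∀ ⦃u v⦄, G.Adj u v → f u ≠ f v)
    (hlt : ∀ v, {u | G.Adj v u ∧ f u < f v}.Subsingleton) : G.IsAcyclic := by
  classical
  intro w c hc
  obtain ⟨m, hm, hmax⟩ := c.support.toFinset.exists_max_image f ⟨w, by simp⟩
  rw [List.mem_toFinset] at hm
  set c' := c.rotate m hm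
  have hc' : c'.IsCycle := hc.rotate hm
  have hle : ∀ i, f (c'.getVert i) ≤ f m := fun i =>
    hmax _ (List.mem_toFinset.mpr ((c.mem_support_rotate_iff m hm).mp (c'.getVert_mem_support i)))
  have hlower : ∀ i, G.Adj m (c'.getVert i) → f (c'.getVert i) < f m := fun i hadj =>
    (hle i).lt_of_ne (hne hadj).symm
  exact hc'.snd_ne_penultimate <| hlt m ⟨c'.adj_snd hc'.not_nil, hlower _ (c'.adj_snd hc'.not_nil)⟩
    ⟨(c'.adj_penultimate hc'.not_nil).symm, hlower _ (c'.adj_penultimate hc'.not_nil).symm⟩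

end SimpleGraph

section Intervals

variable {ι α : Type*} [LinearOrder α] {L U pw : ι → α}

def intervalGraph (L U : ι → α) : SimpleGraph ι :=
  SimpleGraph.fromRel fun a b => (Ioo (L a) (U a) ∩ Ioo (L b) (U b)).Nonempty

lemma intervalGraph_adj {a b : ι} : (intervalGraph L U).Adj a b ↔
    a ≠ b ∧ (Ioo (L a) (U a) ∩ Ioo (L b) (U b)).Nonempty := by
  simp [intervalGraph, inter_comm]

lemma intervalGraph_toDual :
    intervalGraph (fun i => toDual (U i)) (fun i => toDual (L i)) = intervalGraph L U := by
  ext a b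
  simp [intervalGraph_adj, Ioo_toDual, ← preimage_inter, ofDual.surjective.nonempty_preimage]

lemma intervalGraph.left_lt_right_of_adj {a b : ι} (h : (intervalGraph L U).Adj a b) :
    L a < U b := by
  obtain ⟨-, x, ⟨hxa, -⟩, -, hxb⟩ := intervalGraph_adj.mp h
  exact hxa.trans hxb

lemma le_left_of_lt_right (hfree : ∀ u v, u ≠ v → pw u ∉ Ioo (L v) (U v))
    {u v : ι} (huv : u ≠ v) (h : pw u < U v) : pw u ≤ L v :=
  not_lt.mp fun h' => hfree u v huv ⟨h', h⟩

lemma intervalGraph.pw_ne_of_adj (hpw : ∀ v, pw v ∈ Ioo (L v) (U v))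
    (hfree : ∀ u v, u ≠ v → pw u ∉ Ioo (L v) (U v)) ⦃u v : ι⦄
    (h : (intervalGraph L U).Adj u v) : pw u ≠ pw v := fun heq =>
  hfree v u (intervalGraph_adj.mp h).1.symm (heq ▸ hpw u)

lemma intervalGraph.subsingleton_lower_neighbors (hpw : ∀ v, pw v ∈ Ioo (L v) (U v))
    (hfree : ∀ u v, u ≠ v → pw u ∉ Ioo (L v) (U v)) (v : ι) :
    {u | (intervalGraph L U).Adj v u ∧ pw u < pw v}.Subsingleton := by
  rintro a ⟨hva, ha⟩ b ⟨hvb, hb⟩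
  by_contra hab
  have ha_le : pw a ≤ L v := le_left_of_lt_right hfree
    (intervalGraph_adj.mp hva).1.symm (ha.trans (hpw v).2)
  have hb_le : pw b ≤ L v := le_left_of_lt_right hfree
    (intervalGraph_adj.mp hvb).1.symm (hb.trans (hpw v).2)
  have hab_le : pw a ≤ L b := le_left_of_lt_right hfree hab
    (ha_le.trans_lt (left_lt_right_of_adj hvb))
  have hba_le : pw b ≤ L a := le_left_of_lt_right hfree (Ne.symm hab)
    (hb_le.trans_lt (left_lt_right_of_adj hva))
  exact lt_irrefl (pw a) <| calc
    pw a ≤ L b := hab_le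
    _ < pw b := (hpw b).1
    _ ≤ L a := hba_le
    _ < pw a := (hpw a).1

lemma intervalGraph.subsingleton_upper_neighbors (hpw : ∀ v, pw v ∈ Ioo (L v) (U v))
    (hfree : ∀ u v, u ≠ v → pw u ∉ Ioo (L v) (U v)) (v : ι) :
    {u | (intervalGraph L U).Adj v u ∧ pw v < pw u}.Subsingleton := by
  have := subsingleton_lower_neighbors (L := fun i => toDual (U i))
    (U := fun i => toDual (L i)) (pw := fun i => toDual (pw i))
    (fun v => by simpa [Ioo_toDual] using hpw v)
    (fun u v huv => by simpa [Ioo_toDual] using hfree u v huv) v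
  rwa [intervalGraph_toDual] at this

end Intervals

theorem stmt5_general {ι : Type*} (L U pw : ι → ℝ)
    (hpw : ∀ v : ι, pw v ∈ Set.Ioo (L v) (U v))
    (hfree : ∀ u v : ι, u ≠ v → pw u ∉ Set.Ioo (L v) (U v)) :
    (∀ v : ι, ((SimpleGraph.fromRel fun a b : ι =>
        (Set.Ioo (L a) (U a) ∩ Set.Ioo (L b) (U b)).Nonempty).neighborSet v).ncard ≤ 2) ∧
    (SimpleGraph.fromRel fun a b : ι =>
        (Set.Ioo (L a) (U a) ∩ Set.Ioo (L b) (U b)).Nonempty).IsAcyclic := by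
  have hne := intervalGraph.pw_ne_of_adj hpw hfree
  have hlower := intervalGraph.subsingleton_lower_neighbors hpw hfree
  exact ⟨SimpleGraph.ncard_neighborSet_le_two_of_subsingleton pw hne hlower
      (intervalGraph.subsingleton_upper_neighbors hpw hfree),
    SimpleGraph.isAcyclic_of_subsingleton_lower pw hne hlower⟩

theorem stmt5 {ι : Type*} [Fintype ι] (L U pw : ι → ℝ)
    (hpw : ∀ v : ι, pw v ∈ Set.Ioo (L v) (U v))
    (hfree : ∀ u v : ι, u ≠ v → pw u ∉ Set.Ioo (L v) (U v)) :
    (∀ v : ι, ((SimpleGraph.fromRel fun a b : ι =>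
        (Set.Ioo (L a) (U a) ∩ Set.Ioo (L b) (U b)).Nonempty).neighborSet v).ncard ≤ 2) ∧
    (SimpleGraph.fromRel fun a b : ι =>
        (Set.Ioo (L a) (U a) ∩ Set.Ioo (L b) (U b)).Nonempty).IsAcyclic :=
  stmt5_general L U pw hpw hfree
end

section
/- Let T be a finite rooted out-tree (arborescence) on a set of vertices, each vertex v carrying an open real interval I_v and a point ŵ_v ∈ I_v, where every edge (u,v) of T satisfies ŵ_u ∈ I_v. Suppose additionally there is a vertex m in T, a descendant of the root r, with ŵ_m ∈ I_r. Then the vertex set of T can be partitioned into sets of size at least 2 such that each set is a clique in the interval intersection graph (i.e., the intervals in each set pairwise intersect). -/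
/-!
Redirect the parent map at the root to `m`; the resulting map `σ` satisfies `ŵ_{σ v} ∈ I_v` for
every `v`, and its functional graph has a single cycle (through `r` and `m`) with trees hanging
off it. It suffices to pick `f v ∈ I_v` so that every value of `f` is taken at least twice: the
level sets of `f` are then the cliques.

Off the cycle use the win/lose labelling of the hanging forest (`v` is a centre iff one of its
children is not): non-centres take the point of their parent, centres their own point. On the
cycle, the vertices that are not centres are paired along the cycle by the parity of their
distance to the previous centre. If there is no centre on the cycle at all, the vertex `j` with
the smallest right endpoint lets `j - 1`, `j`, `j + 1` share a point, which absorbs an odd cycle.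
-/

open Function Set

theorem WellFounded.exists_mem_iff_exists_rel_not_mem {α : Type*} {r : α → α → Prop}
    (hr : WellFounded r) : ∃ S : Set α, ∀ v, v ∈ S ↔ ∃ w, r w v ∧ w ∉ S := by
  let F : ∀ v, (∀ w, r w v → Prop) → Prop := fun v IH => ∃ w, ∃ h : r w v, ¬ IH w h
  refine ⟨{v | hr.fix F v}, fun v => ?_⟩
  show hr.fix F v ↔ ∃ w, r w v ∧ ¬ hr.fix F w
  rw [hr.fix_eq]
  simp only [F, exists_prop]

section Cycle

variable {n : ℕ}

theorem ZMod.exists_parity_of_nonempty [NeZero n] {M : Set (ZMod n)} (hM : M.Nonempty) :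
    ∃ π : ZMod n → ZMod 2, (∀ i ∉ M, π (i + 1) = π i + 1) ∧ ∀ i ∈ M, π (i + 1) = 1 := by
  classical
  -- `π i` is the parity of the distance from `i` back to the nearest point of `M`.
  have hdist : ∀ i : ZMod n, ∃ t : ℕ, i - (t + 1 : ℕ) ∈ M := by
    obtain ⟨k, hk⟩ := hM
    refine fun i => ⟨(i - k - 1).val, ?_⟩
    simpa using hk
  refine ⟨fun i => (Nat.find (hdist i) + 1 : ℕ), fun i hi => ?_, fun i hi => ?_⟩
  · have hshift : ∀ t : ℕ, i + 1 - ((t + 1 + 1 : ℕ) : ZMod n) = i - (t + 1 : ℕ) := by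
      intro t; push_cast; ring
    have hsucc : Nat.find (hdist (i + 1)) = Nat.find (hdist i) + 1 := by
      have h₂ : ∃ t : ℕ, i + 1 - ((t + 1 + 1 : ℕ) : ZMod n) ∈ M := by
        simpa only [hshift] using hdist i
      rw [Nat.find_comp_succ _ h₂ (by simpa using hi)]
      exact congrArg (· + 1) (Nat.find_congr' fun {t} => by rw [hshift])
    simp only [hsucc]
    push_cast
    ring
  · have h0 : Nat.find (hdist (i + 1)) = 0 := (Nat.find_eq_zero _).2 (by simpa using hi)
    simp only [h0]
    rfl

theorem ZMod.exists_cycle_pairing [Fact (1 < n)] {α : Type*} (a : ZMod n → α)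
    {M : Set (ZMod n)} (hM : M.Nonempty) :
    ∃ g : ZMod n → α, (∀ i, g i = a i ∨ g i = a (i + 1)) ∧ (∀ i ∈ M, g i = a i) ∧
      ∀ i ∉ M, ∃ j ≠ i, g j = g i := by
  classical
  obtain ⟨π, hstep, hstart⟩ := ZMod.exists_parity_of_nonempty hM
  refine ⟨fun i => if i ∉ M ∧ π i = 1 then a (i + 1) else a i, fun i => ?_,
    fun i hi => if_neg fun h => h.1 hi, fun i hi => ?_⟩
  · dsimp only
    split_ifs <;> simp
  by_cases hπ : π i = 1
  · refine ⟨i + 1, by simp, ?_⟩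
    have hnext : ¬(i + 1 ∉ M ∧ π (i + 1) = 1) := fun h => by
      rw [hstep i hi, hπ] at h; exact absurd h.2 (by decide)
    simp only [if_neg hnext, hi, hπ, not_false_eq_true, and_self, if_true]
  · have hprev : i - 1 ∉ M := fun h => hπ (by simpa using hstart _ h)
    have hπprev : π (i - 1) = 1 := by
      have hflip : π i = π (i - 1) + 1 := by simpa using hstep _ hprev
      exact (by decide : ∀ x : ZMod 2, x + 1 ≠ 1 → x = 1) _ (hflip ▸ hπ)
    refine ⟨i - 1, by simp, ?_⟩
    simp only [hprev, hπprev, hi, hπ, not_false_eq_true, and_self, if_true, and_false,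
      if_false, sub_add_cancel]

theorem ZMod.exists_adjacent_eq [NeZero n] (L U a : ZMod n → ℝ)
    (ha : ∀ i, a i ∈ Ioo (L i) (U i)) (hsucc : ∀ i, a (i + 1) ∈ Ioo (L i) (U i)) :
    ∃ (b : ZMod n → ℝ) (j : ZMod n), (∀ i, b i ∈ Ioo (L i) (U i)) ∧
      (∀ i, b (i + 1) ∈ Ioo (L i) (U i)) ∧ b j = b (j + 1) := by
  classical
  obtain ⟨j, hj⟩ := Finite.exists_min U
  set x := max (a j) (a (j + 1))
  have hx : ∀ k, (L k < a j ∨ L k < a (j + 1)) → U j ≤ U k → x ∈ Ioo (L k) (U k) :=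
    fun k hL hU => ⟨lt_max_iff.2 hL, (max_lt (ha j).2 (hsucc j).2).trans_le hU⟩
  have hxj : x ∈ Ioo (L j) (U j) := hx j (Or.inl (ha j).1) le_rfl
  have hxj' : x ∈ Ioo (L (j + 1)) (U (j + 1)) := hx _ (Or.inr (ha _).1) (hj _)
  have hxj'' : x ∈ Ioo (L (j - 1)) (U (j - 1)) :=
    hx _ (Or.inl (by simpa using (hsucc (j - 1)).1)) (hj _)
  refine ⟨fun i => if i = j ∨ i = j + 1 then x else a i, j, fun i => ?_, fun i => ?_, by simp⟩
  · rcases eq_or_ne i j with rfl | h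
    · simpa using hxj
    rcases eq_or_ne i (j + 1) with rfl | h'
    · simpa using hxj'
    simpa [h, h'] using ha i
  · rcases eq_or_ne i (j - 1) with rfl | h
    · simpa using hxj''
    rcases eq_or_ne i j with rfl | h'
    · simpa using hxj
    have : i + 1 ≠ j := fun e => h (eq_sub_of_add_eq e)
    simpa [this, h'] using hsucc i

theorem ZMod.exists_cycle_cover [Fact (1 < n)] (L U a : ZMod n → ℝ)
    (ha : ∀ i, a i ∈ Ioo (L i) (U i)) (hsucc : ∀ i, a (i + 1) ∈ Ioo (L i) (U i))
    (M : Set (ZMod n)) :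
    ∃ g : ZMod n → ℝ, (∀ i, g i ∈ Ioo (L i) (U i)) ∧ (∀ i ∈ M, g i = a i) ∧
      ∀ i ∉ M, ∃ j ≠ i, g j = g i := by
  rcases M.eq_empty_or_nonempty with rfl | hM
  · obtain ⟨b, j, hb, hbsucc, hbj⟩ := ZMod.exists_adjacent_eq L U a ha hsucc
    obtain ⟨g, hg, hgj, hpair⟩ := ZMod.exists_cycle_pairing b (singleton_nonempty (j + 1))
    refine ⟨g, fun i => (hg i).elim (· ▸ hb i) (· ▸ hbsucc i), by simp, fun i _ => ?_⟩
    rcases eq_or_ne i (j + 1) with rfl | hi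
    · refine ⟨j, by simp, ?_⟩
      rw [hgj _ rfl]
      exact (hg j).elim (·.trans hbj) id
    · exact hpair i hi
  · obtain ⟨g, hg, hgM, hpair⟩ := ZMod.exists_cycle_pairing a hM
    exact ⟨g, fun i => (hg i).elim (· ▸ ha i) (· ▸ hsucc i), hgM, hpair⟩

end Cycle

section Orbit

variable {V : Type*} (σ : V → V) (x : V)

noncomputable def orbitCycle : ZMod (minimalPeriod σ x) → V := fun i => σ^[i.val] x

variable {σ x}

theorem orbitCycle_zero : orbitCycle σ x 0 = x := by
  simp [orbitCycle]

theorem orbitCycle_add_one (hx : x ∈ periodicPts σ) (i : ZMod (minimalPeriod σ x)) :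
    orbitCycle σ x (i + 1) = σ (orbitCycle σ x i) := by
  have : NeZero (minimalPeriod σ x) := ⟨(minimalPeriod_pos_of_mem_periodicPts hx).ne'⟩
  have hcast : ∀ k : ℕ, orbitCycle σ x k = σ^[k] x := fun k => by
    simp only [orbitCycle, ZMod.val_natCast, iterate_mod_minimalPeriod_eq]
  rw [← ZMod.natCast_zmod_val i, ← Nat.cast_succ, hcast, hcast, iterate_succ_apply']

theorem orbitCycle_injective (hx : x ∈ periodicPts σ) : Injective (orbitCycle σ x) := by
  have : NeZero (minimalPeriod σ x) := ⟨(minimalPeriod_pos_of_mem_periodicPts hx).ne'⟩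
  exact fun i j h => ZMod.val_injective _ <|
    iterate_injOn_Iio_minimalPeriod (ZMod.val_lt i) (ZMod.val_lt j) h

end Orbit

theorem exists_iterate_update_eq {V : Type*} [DecidableEq V] {f : V → V} {r y v : V} {k : ℕ}
    (hk : f^[k] v = r) : ∃ j, (update f r y)^[j] v = r := by
  induction k generalizing v with
  | zero => exact ⟨0, hk⟩
  | succ k ih =>
    rcases eq_or_ne v r with rfl | hv
    · exact ⟨0, rfl⟩
    · obtain ⟨j, hj⟩ := ih hk
      exact ⟨j + 1, by rwa [iterate_succ_apply, update_of_ne hv]⟩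

theorem wellFounded_apply_eq_and_not_mem {V : Type*} [Finite V] {σ : V → V} {x₀ : V}
    (hreach : ∀ v, ∃ k, σ^[k] v = x₀) {C : Set V} (hx₀ : x₀ ∈ C) :
    WellFounded fun w v => σ w = v ∧ w ∉ C := by
  classical
  let h : V → ℕ := fun v => Nat.find (hreach v)
  have hh : ∀ w ∉ C, h w = h (σ w) + 1 := fun w hw =>
    Nat.find_comp_succ _ _ fun (e : w = x₀) => hw (e ▸ hx₀)
  have : Nonempty V := ⟨x₀⟩
  obtain ⟨B, hB⟩ := Finite.exists_max h
  refine Subrelation.wf (fun {w v} hwv => ?_) (measure fun v => h B - h v).wf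
  obtain ⟨rfl, hw⟩ := hwv
  have := hh w hw
  have := hB w
  show h B - h w < h B - h (σ w)
  omega

theorem exists_partnered_extend {V ι α : Type*} {σ : V → V} {c : ι → V} (hc : Injective c)
    {S : Set V} (hS : ∀ v, v ∈ S ↔ ∃ w, (σ w = v ∧ w ∉ range c) ∧ w ∉ S)
    (I : V → Set α) (pw : V → α) (hpw : ∀ v, pw v ∈ I v) (hσ : ∀ v, pw (σ v) ∈ I v)
    (g : ι → α) (hg : ∀ i, g i ∈ I (c i)) (hgS : ∀ i, c i ∈ S → g i = pw (c i))
    (hpair : ∀ i, c i ∉ S → ∃ j ≠ i, g j = g i) :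
    ∃ f : V → α, (∀ v, f v ∈ I v) ∧ ∀ v, ∃ w ≠ v, f w = f v := by
  classical
  set f := extend c g fun v => if v ∈ S then pw v else pw (σ v)
  have hf_cycle : ∀ i, f (c i) = g i := hc.extend_apply _ _
  have hf_off : ∀ v ∉ range c, f v = if v ∈ S then pw v else pw (σ v) :=
    fun v hv => extend_apply' _ _ _ hv
  have hf_S : ∀ v ∈ S, f v = pw v := by
    intro v hv
    by_cases hvc : v ∈ range c
    · obtain ⟨i, rfl⟩ := hvc
      exact (hf_cycle i).trans (hgS i hv)
    · rw [hf_off v hvc, if_pos hv]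
  have hf_not_S : ∀ v ∉ range c, v ∉ S → f v = pw (σ v) := fun v hvc hv => by
    rw [hf_off v hvc, if_neg hv]
  refine ⟨f, fun v => ?_, fun v => ?_⟩
  · by_cases hvc : v ∈ range c
    · obtain ⟨i, rfl⟩ := hvc
      exact hf_cycle i ▸ hg i
    · rw [hf_off v hvc]
      split_ifs
      exacts [hpw v, hσ v]
  by_cases hv : v ∈ S
  · obtain ⟨w, ⟨rfl, hwc⟩, hwS⟩ := (hS _).1 hv
    exact ⟨w, (ne_of_mem_of_not_mem hv hwS).symm, by rw [hf_not_S w hwc hwS, hf_S _ hv]⟩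
  by_cases hvc : v ∈ range c
  · obtain ⟨i, rfl⟩ := hvc
    obtain ⟨j, hji, hgj⟩ := hpair i hv
    exact ⟨c j, hc.ne hji, by rw [hf_cycle, hf_cycle, hgj]⟩
  · have hσv : σ v ∈ S := (hS _).2 ⟨v, ⟨rfl, hvc⟩, hv⟩
    exact ⟨σ v, ne_of_mem_of_not_mem hσv hv, by rw [hf_S _ hσv, hf_not_S v hvc hv]⟩

theorem exists_partnered_choice {V : Type*} [Finite V] (σ : V → V) (x₀ : V)
    (hreach : ∀ v, ∃ k, σ^[k] v = x₀) (hne : σ x₀ ≠ x₀) (L U pw : V → ℝ)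
    (hpw : ∀ v, pw v ∈ Ioo (L v) (U v)) (hσ : ∀ v, pw (σ v) ∈ Ioo (L v) (U v)) :
    ∃ f : V → ℝ, (∀ v, f v ∈ Ioo (L v) (U v)) ∧ ∀ v, ∃ w ≠ v, f w = f v := by
  have hx₀ : x₀ ∈ periodicPts σ := by
    obtain ⟨k, hk⟩ := hreach (σ x₀)
    exact mk_mem_periodicPts k.succ_pos hk
  have : Fact (1 < minimalPeriod σ x₀) := ⟨by
    have := minimalPeriod_pos_of_mem_periodicPts hx₀
    have : minimalPeriod σ x₀ ≠ 1 := fun h => hne (minimalPeriod_eq_one_iff_isFixedPt.1 h)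
    omega⟩
  set c := orbitCycle σ x₀
  obtain ⟨S, hS⟩ := (wellFounded_apply_eq_and_not_mem hreach
    (mem_range.2 ⟨0, orbitCycle_zero⟩)).exists_mem_iff_exists_rel_not_mem
  obtain ⟨g, hg, hgS, hpair⟩ := ZMod.exists_cycle_cover (L ∘ c) (U ∘ c) (pw ∘ c)
    (fun i => hpw _) (fun i => by simpa [c, orbitCycle_add_one hx₀] using hσ (c i))
    {i | c i ∈ S}
  exact exists_partnered_extend (orbitCycle_injective hx₀) hS _ pw hpw hσ g hg hgS hpair

theorem exists_clique_partition_of_partnered {V α : Type*} [Fintype V] [DecidableEq V]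
    (I : V → Set α) (f : V → α) (hf : ∀ v, f v ∈ I v) (hpartner : ∀ v, ∃ w ≠ v, f w = f v) :
    ∃ C : Finset (Finset V),
      (C : Set (Finset V)).PairwiseDisjoint id ∧
      C.biUnion id = Finset.univ ∧
      ∀ c ∈ C, 2 ≤ c.card ∧ ∀ u ∈ c, ∀ v ∈ c, u ≠ v → (I u ∩ I v).Nonempty := by
  classical
  refine ⟨Finset.univ.image fun v => ({w | f w = f v} : Finset V), ?_, ?_, ?_⟩
  · rintro _ hc₁ _ hc₂ hne
    obtain ⟨v₁, -, rfl⟩ := Finset.mem_image.1 hc₁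
    obtain ⟨v₂, -, rfl⟩ := Finset.mem_image.1 hc₂
    refine Finset.disjoint_left.2 fun w h₁ h₂ => hne ?_
    rw [id, Finset.mem_filter_univ] at h₁ h₂
    rw [← h₁, h₂]
  · ext v
    simp
  · intro c hc
    obtain ⟨v, -, rfl⟩ := Finset.mem_image.1 hc
    obtain ⟨w, hwv, hfw⟩ := hpartner v
    refine ⟨Finset.one_lt_card.2 ⟨v, by simp, w, by simp [hfw], hwv.symm⟩,
      fun u hu u' hu' _ => ⟨f v, ?_, ?_⟩⟩
    · rw [Finset.mem_filter_univ] at hu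
      exact hu ▸ hf u
    · rw [Finset.mem_filter_univ] at hu'
      exact hu' ▸ hf u'

theorem stmt7_general {V : Type*} [Fintype V] [DecidableEq V]
    (L U pw : V → ℝ) (hpw : ∀ v : V, pw v ∈ Set.Ioo (L v) (U v))
    (r : V) (parent : V → V)
    (htree : ∀ v : V, ∃ n : ℕ, parent^[n] v = r)
    (hedge : ∀ v : V, v ≠ r → pw (parent v) ∈ Set.Ioo (L v) (U v))
    (m : V) (hm : m ≠ r) (hmr : pw m ∈ Set.Ioo (L r) (U r)) :
    ∃ C : Finset (Finset V),
      (C : Set (Finset V)).PairwiseDisjoint id ∧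
      C.biUnion id = Finset.univ ∧
      ∀ c ∈ C, 2 ≤ c.card ∧
        ∀ u ∈ c, ∀ v ∈ c, u ≠ v →
          (Set.Ioo (L u) (U u) ∩ Set.Ioo (L v) (U v)).Nonempty := by
  set σ := update parent r m
  have hσ : ∀ v, pw (σ v) ∈ Ioo (L v) (U v) := fun v => by
    rcases eq_or_ne v r with rfl | hv
    · simpa [σ] using hmr
    · simpa [σ, hv] using hedge v hv
  have hreach : ∀ v, ∃ k, σ^[k] v = r := fun v => exists_iterate_update_eq (htree v).choose_spec
  obtain ⟨f, hf, hpartner⟩ :=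
    exists_partnered_choice σ r hreach (by simpa [σ] using hm) L U pw hpw hσ
  exact exists_clique_partition_of_partnered _ f hf hpartner

theorem stmt7 {V : Type*} [Fintype V] [DecidableEq V]
    (L U pw : V → ℝ) (hpw : ∀ v : V, pw v ∈ Set.Ioo (L v) (U v))
    (r : V) (parent : V → V) (hroot : parent r = r)
    (htree : ∀ v : V, ∃ n : ℕ, parent^[n] v = r)
    (hedge : ∀ v : V, v ≠ r → pw (parent v) ∈ Set.Ioo (L v) (U v))
    (m : V) (hm : m ≠ r) (hmr : pw m ∈ Set.Ioo (L r) (U r)) :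
    ∃ C : Finset (Finset V),
      (C : Set (Finset V)).PairwiseDisjoint id ∧
      C.biUnion id = Finset.univ ∧
      ∀ c ∈ C, 2 ≤ c.card ∧
        ∀ u ∈ c, ∀ v ∈ c, u ≠ v →
          (Set.Ioo (L u) (U u) ∩ Set.Ioo (L v) (U v)).Nonempty :=
  stmt7_general L U pw hpw r parent htree hedge m hm hmr
end

section
/- For every integer β ≥ 2, there is no deterministic algorithm for hypergraph orientation under uncertainty with predictions that is simultaneously β-robust (at most β·|OPT| queries on every input, regardless of predictions) and α-consistent for some α < 1 + 1/β (at most α·|OPT| queries whenever all predictions are correct). Concretely: for the instance with a single hyperedge on vertices {0,1,…,β}, intervals I_1,…,I_β pairwise intersecting and all intersecting I_0, with I_0 lying leftmost, any deterministic algorithm either makes β+1 queries on some realization where OPT makes 1 query (violating β-robustness), or makes β+1 queries on the realization where all predictions are correct while OPT makes β queries (violating α-consistency for α < 1 + 1/β). -/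
open Finset

/-- A deterministic adaptive query strategy: `seq w` is the sequence of queries
the algorithm performs when the realized weights are `w`.  The `adaptive`
condition says that the `(k+1)`-st query only depends on the answers to the
first `k` queries. -/
structure DetAlg (n : ℕ) where
  seq : (Fin n → ℝ) → List (Fin n)
  nodup : ∀ w, (seq w).Nodup
  adaptive : ∀ w w' : Fin n → ℝ, ∀ k : ℕ,
    (∀ v ∈ (seq w).take k, w v = w' v) →
    (seq w).take (k + 1) = (seq w').take (k + 1)

/-- Size of a minimum feasible query set. -/
noncomputable def optSize {n : ℕ} (L U w : Fin n → ℝ) (E : Finset (Finset (Fin n))) : ℕ :=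
  sInf {k : ℕ | ∃ Q : Finset (Fin n), Q.card = k ∧ ∀ S ∈ E, Solves L U w Q S}

/-- Lower bound on the consistency-robustness tradeoff: no deterministic
`β`-robust algorithm is `α`-consistent for `α < 1 + 1/β`, witnessed on the
single-hyperedge instance with vertices `{0,1,…,β}`. -/
theorem stmt11 (β : ℕ) (hβ : 2 ≤ β) (α : ℝ) (hα : α < 1 + 1 / (β : ℝ))
    (L U pw : Fin (β + 1) → ℝ)
    (hL0 : L 0 = 0) (hU0 : U 0 = 2)
    (hLi : ∀ i : Fin (β + 1), i ≠ 0 → L i = 1 ∧ U i = 3)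
    (hpw0 : pw 0 = 1.5) (hpwi : ∀ i : Fin (β + 1), i ≠ 0 → pw i = 2.5)
    (A : DetAlg (β + 1))
    (hfeas : ∀ w : Fin (β + 1) → ℝ, (∀ i, w i ∈ Set.Ioo (L i) (U i)) →
      Solves L U w (A.seq w).toFinset Finset.univ) :
    ¬ ((((A.seq pw).length : ℝ) ≤ α * (optSize L U pw {Finset.univ} : ℝ)) ∧
       (∀ w : Fin (β + 1) → ℝ, (∀ i, w i ∈ Set.Ioo (L i) (U i)) →
         ((A.seq w).length : ℝ) ≤ (β : ℝ) * (optSize L U w {Finset.univ} : ℝ))) := by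
  rintro ⟨hcons, hrob⟩
  have hβR : (0:ℝ) < β := by exact_mod_cast (by omega : 0 < β)
  have hone : (⟨1, by omega⟩ : Fin (β+1)) ≠ 0 := by
    simp [Fin.ext_iff]
  -- any set solving on pw must contain all nonzero vertices
  have hforce : ∀ Q : Finset (Fin (β+1)), Solves L U pw Q Finset.univ →
      ∀ i : Fin (β+1), i ≠ 0 → i ∈ Q := by
    intro Q hS i hi
    obtain ⟨m, -, hm⟩ := hS
    by_cases hm0 : m = 0
    · subst hm0
      by_contra hiQ
      have h := hm i (mem_univ i) hi
      rw [qhi, qlo, if_neg hiQ, (hLi i hi).1] at h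
      split_ifs at h with h0
      · rw [hpw0] at h; norm_num at h
      · rw [hU0] at h; norm_num at h
    · have h := hm 0 (mem_univ 0) (Ne.symm hm0)
      rw [qhi, qlo] at h
      split_ifs at h <;>
        simp only [hpwi m hm0, (hLi m hm0).2, hpw0, hL0] at h <;> norm_num at h
  have hIoo_pw : ∀ i, pw i ∈ Set.Ioo (L i) (U i) := by
    intro i
    by_cases h0 : i = 0
    · subst h0; rw [hpw0, hL0, hU0]; constructor <;> norm_num
    · rw [hpwi i h0, (hLi i h0).1, (hLi i h0).2]; constructor <;> norm_num
  have hsolpw := hfeas pw hIoo_pw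
  have hQβ : (Finset.univ \ {(0 : Fin (β+1))}).card = β := by
    rw [Finset.card_sdiff_of_subset (by simp)]
    simp
  have hsolQB : Solves L U pw (Finset.univ \ {(0:Fin (β+1))}) Finset.univ := by
    refine ⟨0, mem_univ _, fun u _ hu => ?_⟩
    rw [qhi, qlo, if_neg (by simp), if_pos (by simp [hu]), hU0, hpwi u hu]
    norm_num
  have hopt_pw : optSize L U pw {Finset.univ} = β := by
    unfold optSize
    apply le_antisymm
    · apply Nat.sInf_le
      refine ⟨_, hQβ, fun S hS => ?_⟩
      rw [Finset.mem_singleton] at hS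
      rw [hS]; exact hsolQB
    · apply le_csInf
      · refine ⟨β, _, hQβ, fun S hS => ?_⟩
        rw [Finset.mem_singleton] at hS
        rw [hS]; exact hsolQB
      · rintro k ⟨Q, rfl, hQ⟩
        have hsub : Finset.univ \ {(0:Fin (β+1))} ⊆ Q := by
          intro i hi
          rw [Finset.mem_sdiff, Finset.mem_singleton] at hi
          exact hforce Q (hQ _ (Finset.mem_singleton_self _)) i hi.2
        calc β = _ := hQβ.symm
          _ ≤ Q.card := card_le_card hsub
  -- consistency forces at most β queries on pw
  have hlen_le : (A.seq pw).length ≤ β := by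
    rw [hopt_pw] at hcons
    have h2 : α * β < (β:ℝ) + 1 := by
      have h3 := mul_lt_mul_of_pos_right hα hβR
      rw [add_mul, one_mul, div_mul_cancel₀ _ (ne_of_gt hβR)] at h3
      exact h3
    have h4 : ((A.seq pw).length : ℝ) < (β:ℝ) + 1 := lt_of_le_of_lt hcons h2
    have h5 : (A.seq pw).length < β + 1 := by exact_mod_cast h4
    omega
  set l := A.seq pw with hl
  have hnodup := A.nodup pw
  have hcard : l.toFinset.card = l.length := List.toFinset_card_of_nodup hnodup
  have hsub : Finset.univ \ {(0:Fin (β+1))} ⊆ l.toFinset := by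
    intro i hi
    rw [Finset.mem_sdiff, Finset.mem_singleton] at hi
    exact hforce _ hsolpw i hi.2
  have hβle : β ≤ l.length := by
    calc β = _ := hQβ.symm
      _ ≤ l.toFinset.card := card_le_card hsub
      _ = l.length := hcard
  have hlenβ : l.length = β := le_antisymm hlen_le hβle
  have hQeq : l.toFinset = Finset.univ \ {(0:Fin (β+1))} :=
    (Finset.eq_of_subset_of_card_le hsub (by rw [hcard, hlenβ, hQβ])).symm
  have h0notin : (0 : Fin (β+1)) ∉ l := by
    intro h
    have h1 : (0:Fin (β+1)) ∈ l.toFinset := List.mem_toFinset.mpr h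
    rw [hQeq] at h1
    simp at h1
  have hne : l ≠ [] := by
    intro h
    rw [h] at hlenβ
    simp at hlenβ
    omega
  set vlast := l.getLast hne with hvl
  have hvmem : vlast ∈ l := List.getLast_mem hne
  have hv0 : vlast ≠ 0 := fun h => h0notin (h ▸ hvmem)
  have hsplit : l.dropLast ++ [vlast] = l := List.dropLast_append_getLast hne
  have hvnot : vlast ∉ l.dropLast := by
    have hnd : (l.dropLast ++ [vlast]).Nodup := by rw [hsplit]; exact hnodup
    have hdisj := (List.nodup_append'.mp hnd).2.2
    intro hmem
    exact hdisj hmem (List.mem_singleton.mpr rfl)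
  have hdrop : l.take (β - 1) = l.dropLast := by
    rw [List.dropLast_eq_take, hlenβ]
  -- the adversarial realization
  set w' : Fin (β+1) → ℝ :=
    fun i => if i = 0 then 0.5 else if i = vlast then 1.5 else 2.5 with hw'
  have hw'0 : w' 0 = 0.5 := by simp [hw']
  have hw'v : w' vlast = 1.5 := by simp [hw', hv0]
  have hw'o : ∀ i : Fin (β+1), i ≠ 0 → i ≠ vlast → w' i = 2.5 := by
    intro i h0 hv; simp [hw', h0, hv]
  have hIoo' : ∀ i, w' i ∈ Set.Ioo (L i) (U i) := by
    intro i
    by_cases h0 : i = 0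
    · subst h0; rw [hw'0, hL0, hU0]; constructor <;> norm_num
    · rw [(hLi i h0).1, (hLi i h0).2]
      by_cases hv : i = vlast
      · subst hv; rw [hw'v]; constructor <;> norm_num
      · rw [hw'o i h0 hv]; constructor <;> norm_num
  -- w' agrees with pw on everything the algorithm queries before the last step
  have hagree : ∀ v ∈ l.take (β - 1), pw v = w' v := by
    intro v hv
    rw [hdrop] at hv
    have hvl' : v ∈ l := List.mem_of_mem_dropLast hv
    have hv0' : v ≠ 0 := fun h => h0notin (h ▸ hvl')
    have hvv : v ≠ vlast := fun h => hvnot (h ▸ hv)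
    rw [hpwi v hv0', hw'o v hv0' hvv]
  have htake := A.adaptive pw w' (β - 1) hagree
  have hβ1 : β - 1 + 1 = β := by omega
  rw [hβ1] at htake
  have hltake : l.take β = l := List.take_of_length_le (le_of_eq hlenβ)
  have hpre : (A.seq w').take β = l := by rw [← htake]; exact hltake
  -- the algorithm must make at least β+1 queries on w'
  have hlong : β + 1 ≤ (A.seq w').length := by
    by_contra hcon
    push_neg at hcon
    have hle : (A.seq w').length ≤ β := by omega
    have heq : A.seq w' = l := by rw [← hpre]; exact (List.take_of_length_le hle).symm
    have hsol := hfeas w' hIoo'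
    rw [heq, hQeq] at hsol
    obtain ⟨m, -, hm⟩ := hsol
    by_cases hm0 : m = 0
    · subst hm0
      have h := hm vlast (mem_univ _) hv0
      rw [qhi, qlo, if_neg (by simp), if_pos (by simp [hv0]), hU0, hw'v] at h
      norm_num at h
    · have h := hm 0 (mem_univ _) (Ne.symm hm0)
      rw [qhi, qlo, if_pos (by simp [hm0]), if_neg (by simp), hL0] at h
      have hgt : (1:ℝ) < w' m := by
        by_cases hv : m = vlast
        · subst hv; rw [hw'v]; norm_num
        · rw [hw'o m hm0 hv]; norm_num
      linarith
  -- OPT on w' is 1 (query vertex 0 only)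
  have hopt1 : optSize L U w' {Finset.univ} = 1 := by
    unfold optSize
    have h1mem : 1 ∈ {k : ℕ | ∃ Q : Finset (Fin (β+1)), Q.card = k ∧
        ∀ S ∈ ({Finset.univ} : Finset (Finset (Fin (β+1)))), Solves L U w' Q S} := by
      refine ⟨{0}, by simp, fun S hS => ?_⟩
      rw [Finset.mem_singleton] at hS
      subst hS
      refine ⟨0, mem_univ _, fun u _ hu => ?_⟩
      rw [qhi, qlo, if_pos (Finset.mem_singleton_self 0),
        if_neg (by simp [hu]), (hLi u hu).1, hw'0]
      norm_num
    apply le_antisymm (Nat.sInf_le h1mem)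
    rw [Nat.one_le_iff_ne_zero]
    intro h0
    have hmem := Nat.sInf_mem ⟨1, h1mem⟩
    rw [h0] at hmem
    obtain ⟨Q, hQ0, hQs⟩ := hmem
    rw [Finset.card_eq_zero] at hQ0
    subst hQ0
    obtain ⟨m, -, hm⟩ := hQs Finset.univ (Finset.mem_singleton_self _)
    by_cases hm0 : m = 0
    · subst hm0
      have h := hm ⟨1, by omega⟩ (mem_univ _) hone
      rw [qhi, qlo, if_neg (Finset.notMem_empty _), if_neg (Finset.notMem_empty _),
        hU0, (hLi _ hone).1] at h
      norm_num at h
    · have h := hm 0 (mem_univ _) (Ne.symm hm0)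
      rw [qhi, qlo, if_neg (Finset.notMem_empty _), if_neg (Finset.notMem_empty _),
        (hLi m hm0).2, hL0] at h
      norm_num at h
  -- robustness is violated
  have hr := hrob w' hIoo'
  rw [hopt1] at hr
  push_cast at hr
  rw [mul_one] at hr
  have hlongR : ((β:ℝ) + 1) ≤ ((A.seq w').length : ℝ) := by exact_mod_cast hlong
  linarith
end

section
/- Let a/b be a rational number with integers a ≥ 2b > 0. For every deterministic algorithm for hypergraph orientation under uncertainty with predictions, either its competitive ratio on instances with mandatory query distance k_M = 0 is at least a/(a−b) = 1 + 1/(a/b − 1), or its competitive ratio on instances with arbitrary k_M is at least a/b. -/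
open Finset

/-!
Run the algorithm on the realization where every left vertex has weight `0.9` and every right
vertex `2.5`. If it queries all left vertices, move the last queried one to `1.5`: the run up to
that query does not change, so all left vertices are still queried, but now every right vertex is
mandatory, exactly as under the predicted weights. The algorithm queries all `a` vertices, the
optimum is the `a - b` right vertices and `k_M = 0`. Otherwise some left vertex is never queried,
which forces all right vertices to be queried; moving the last queried right vertex to `1.2`
keeps them queried and now forces every left vertex as well, while the `b` left vertices alone
form an optimal query set.
-/

open Function

section Hyperedge

variable {V : Type*} [DecidableEq V] {L U w : V → ℝ} {Q T : Finset V} {i v : V}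

lemma qlo_le_self (h : L v ≤ w v) : qlo L w Q v ≤ w v := by
  unfold qlo; split_ifs <;> simp [h]

lemma self_le_qhi (h : w v ≤ U v) : w v ≤ qhi U w Q v := by
  unfold qhi; split_ifs <;> simp [h]

lemma mem_of_lt_qlo (h : L v < qlo L w Q v) : v ∈ Q := by
  by_contra hv
  simp [qlo, hv] at h

lemma solves_insert_of_forall_le (h : ∀ u ∈ T, qhi U w Q i ≤ qlo L w Q u) :
    Solves L U w Q (insert i T) := by
  refine ⟨i, mem_insert_self i T, fun u hu hui => h u ?_⟩
  simpa [hui] using hu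

lemma Solves.forall_qhi_le_qlo (hiT : i ∉ T)
    (hlo : ∀ m ∈ T, qlo L w Q i < qhi U w Q m) (h : Solves L U w Q (insert i T)) :
    ∀ u ∈ T, qhi U w Q i ≤ qlo L w Q u := by
  obtain ⟨m, hm, hmin⟩ := h
  rcases mem_insert.1 hm with rfl | hmT
  · exact fun u hu => hmin u (mem_insert_of_mem hu) (ne_of_mem_of_not_mem hu hiT)
  · exact absurd (hmin i (mem_insert_self i T) (ne_of_mem_of_not_mem hmT hiT).symm)
      (hlo m hmT).not_ge

lemma Solves.subset_of_lt (hiT : i ∉ T)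
    (hlo : ∀ m ∈ T, qlo L w Q i < qhi U w Q m) (hhi : ∀ u ∈ T, L u < qhi U w Q i)
    (h : Solves L U w Q (insert i T)) : T ⊆ Q := fun u hu =>
  mem_of_lt_qlo ((hhi u hu).trans_le (h.forall_qhi_le_qlo hiT hlo u hu))

lemma Solves.subset_of_notMem (hiT : i ∉ T) (hiQ : i ∉ Q)
    (hw : ∀ u ∈ T, w u ∈ Set.Ioo (L u) (U u)) (hT : ∀ u ∈ T, L i < L u ∧ L u < U i)
    (h : Solves L U w Q (insert i T)) : T ⊆ Q := by
  refine h.subset_of_lt hiT (fun m hm => ?_) (fun u hu => ?_)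
  · calc qlo L w Q i = L i := by simp [qlo, hiQ]
      _ < w m := (hT m hm).1.trans (hw m hm).1
      _ ≤ qhi U w Q m := self_le_qhi (hw m hm).2.le
  · simpa [qhi, hiQ] using (hT u hu).2

lemma Solves.subset_of_lt_of_lt (hiT : i ∉ T) (hwi : L i ≤ w i ∧ w i ≤ U i)
    (hw : ∀ u ∈ T, w u ≤ U u) (hT : ∀ u ∈ T, L u < w i ∧ w i < w u)
    (h : Solves L U w Q (insert i T)) : T ⊆ Q := by
  refine h.subset_of_lt hiT (fun m hm => ?_) (fun u hu => ?_)
  · exact ((qlo_le_self hwi.1).trans_lt (hT m hm).2).trans_le (self_le_qhi (hw m hm))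
  · exact (hT u hu).1.trans_le (self_le_qhi hwi.2)

lemma Solves.mem_of_lt (hiT : i ∉ T)
    (hw : ∀ u ∈ T, w u ∈ Set.Ioo (L u) (U u)) (hT : ∀ u ∈ T, L i < L u)
    {r : V} (hrT : r ∈ T) (hrQ : r ∈ Q) (hwr : w r < U i)
    (h : Solves L U w Q (insert i T)) : i ∈ Q := by
  by_contra hiQ
  have hlo : ∀ m ∈ T, qlo L w Q i < qhi U w Q m := fun m hm =>
    calc qlo L w Q i = L i := by simp [qlo, hiQ]
      _ < w m := (hT m hm).trans (hw m hm).1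
      _ ≤ qhi U w Q m := self_le_qhi (hw m hm).2.le
  have := h.forall_qhi_le_qlo hiT hlo r hrT
  simp only [qhi, qlo, hiQ, hrQ, if_false, if_true] at this
  linarith

end Hyperedge

section QuerySets

variable {V : Type*} [DecidableEq V]

def Feasible (L U w : V → ℝ) (E : Finset (Finset V)) (Q : Finset V) : Prop :=
  ∀ S ∈ E, Solves L U w Q S

lemma IsLeast.filter_mandatory_eq [Fintype V] {L U w : V → ℝ} {E : Finset (Finset V)}
    {Q₀ : Finset V} [DecidablePred (Mandatory L U w E)]
    (h : IsLeast {Q | Feasible L U w E Q} Q₀) : univ.filter (Mandatory L U w E) = Q₀ := by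
  ext v
  simp only [mem_filter, Finset.mem_univ, true_and]
  exact ⟨fun hv => hv Q₀ h.1, fun hv Q hQ => h.2 hQ hv⟩

lemma optSize_eq_card {n : ℕ} {L U w : Fin n → ℝ} {E : Finset (Finset (Fin n))}
    {Q₀ : Finset (Fin n)} (h₀ : Feasible L U w E Q₀)
    (hmin : ∀ Q, Feasible L U w E Q → Q₀.card ≤ Q.card) : optSize L U w E = Q₀.card :=
  le_antisymm (Nat.sInf_le ⟨Q₀, rfl, h₀⟩)
    (le_csInf ⟨_, Q₀, rfl, h₀⟩ fun _ ⟨Q, hQ, hfeas⟩ => hQ ▸ hmin Q hfeas)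

lemma IsLeast.optSize_eq {n : ℕ} {L U w : Fin n → ℝ} {E : Finset (Finset (Fin n))}
    {Q₀ : Finset (Fin n)} (h : IsLeast {Q | Feasible L U w E Q} Q₀) :
    optSize L U w E = Q₀.card :=
  optSize_eq_card h.1 fun _ hQ => card_le_card (h.2 hQ)

end QuerySets

namespace DetAlg

variable {n : ℕ} (A : DetAlg n)

/-- The adversary's move: changing the weight of the vertex of `T` that is queried last does
not change the run of the algorithm before that query, so all of `T` is still queried. -/
lemma exists_forall_subset_seq_update (w : Fin n → ℝ) {T : Finset (Fin n)} (hT : T.Nonempty)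
    (hTw : T ⊆ (A.seq w).toFinset) :
    ∃ v ∈ T, ∀ x, T ⊆ (A.seq (update w v x)).toFinset := by
  have hmem : ∀ u ∈ T, u ∈ A.seq w := fun u hu => List.mem_toFinset.1 (hTw hu)
  obtain ⟨v, hv, hlast⟩ := exists_max_image T (A.seq w).idxOf hT
  refine ⟨v, hv, fun x u hu => ?_⟩
  have hagree : ∀ y ∈ (A.seq w).take ((A.seq w).idxOf v), w y = update w v x y := by
    intro y hy
    have hyv : y ≠ v := by
      rintro rfl
      exact lt_irrefl _ ((List.mem_take_iff_idxOf_lt (hmem y hv)).1 hy)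
    rw [update_of_ne hyv]
  have hu : u ∈ (A.seq w).take ((A.seq w).idxOf v + 1) :=
    (List.mem_take_iff_idxOf_lt (hmem u hu)).2 (Nat.lt_succ_of_le (hlast u hu))
  rw [A.adaptive _ _ _ hagree] at hu
  exact List.mem_toFinset.2 (List.take_subset _ _ hu)

lemma le_length_seq {w : Fin n → ℝ} (h : ∀ v, v ∈ A.seq w) : n ≤ (A.seq w).length := by
  calc n = (univ : Finset (Fin n)).card := (card_fin n).symm
    _ ≤ (A.seq w).toFinset.card := card_le_card fun v _ => List.mem_toFinset.2 (h v)
    _ ≤ (A.seq w).length := List.toFinset_card_le _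

end DetAlg

section StarFamily

variable {V : Type*} [DecidableEq V] {L U w : V → ℝ} {P Q : Finset V}

/-- Left weights lie below every right interval and right weights above every left interval, so
`P` alone and `Pᶜ` alone are both feasible query sets. -/
def baseWeight (P : Finset V) (v : V) : ℝ :=
  if v ∈ P then 0.9 else 2.5

lemma baseWeight_mem_Ioo (hP : ∀ i ∈ P, L i = 0 ∧ U i = 2)
    (hPc : ∀ u ∉ P, L u = 1 ∧ U u = 3) (v : V) : baseWeight P v ∈ Set.Ioo (L v) (U v) := by
  by_cases hv : v ∈ P
  · simp only [baseWeight, hv, if_true, hP v hv]; norm_num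
  · simp only [baseWeight, hv, if_false, hPc v hv]; norm_num

variable [Fintype V]

def starFamily (P : Finset V) : Finset (Finset V) :=
  P.image fun i => insert i Pᶜ

lemma feasible_starFamily_iff :
    Feasible L U w (starFamily P) Q ↔ ∀ i ∈ P, Solves L U w Q (insert i Pᶜ) := by
  simp [Feasible, starFamily]

lemma compl_subset_of_notMem (hP : ∀ i ∈ P, L i = 0 ∧ U i = 2)
    (hPc : ∀ u ∉ P, L u = 1 ∧ U u = 3) (hw : ∀ v, w v ∈ Set.Ioo (L v) (U v))
    {i : V} (hi : i ∈ P) (hiQ : i ∉ Q) (hQ : Feasible L U w (starFamily P) Q) : Pᶜ ⊆ Q :=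
  (feasible_starFamily_iff.1 hQ i hi).subset_of_notMem (by simpa using hi) hiQ
    (fun u _ => hw u) fun u hu => by
      simp only [hP i hi, hPc u (mem_compl.1 hu)]; norm_num

lemma mem_of_mem_compl_of_lt (hP : ∀ i ∈ P, L i = 0 ∧ U i = 2)
    (hPc : ∀ u ∉ P, L u = 1 ∧ U u = 3) (hw : ∀ v, w v ∈ Set.Ioo (L v) (U v))
    {r : V} (hr : r ∈ Q) (hrP : r ∉ P) (hwr : w r < 2)
    (hQ : Feasible L U w (starFamily P) Q) {i : V} (hi : i ∈ P) : i ∈ Q :=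
  (feasible_starFamily_iff.1 hQ i hi).mem_of_lt (by simpa using hi) (fun u _ => hw u)
    (fun u hu => by simp only [hP i hi, hPc u (mem_compl.1 hu)]; norm_num)
    (mem_compl.2 hrP) hr (by rwa [(hP i hi).2])

lemma isLeast_compl (hP : ∀ i ∈ P, L i = 0 ∧ U i = 2) (hPc : ∀ u ∉ P, L u = 1 ∧ U u = 3)
    (hw : ∀ u ∉ P, w u ∈ Set.Icc 2 3) {i : V} (hi : i ∈ P) (hwi : w i ∈ Set.Ioo 1 2) :
    IsLeast {Q | Feasible L U w (starFamily P) Q} Pᶜ := by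
  refine ⟨feasible_starFamily_iff.2 fun j hj => solves_insert_of_forall_le fun u hu => ?_,
    fun Q hQ => (feasible_starFamily_iff.1 hQ i hi).subset_of_lt_of_lt (by simpa using hi)
      ?_ ?_ ?_⟩
  · have hjc : j ∉ Pᶜ := by simpa using hj
    simp only [qhi, qlo, hu, hjc, if_true, if_false, (hP j hj).2]
    exact (hw u (mem_compl.1 hu)).1
  · rw [hP i hi |>.1, hP i hi |>.2]; constructor <;> linarith [hwi.1, hwi.2]
  · intro u hu; rw [(hPc u (mem_compl.1 hu)).2]; exact (hw u (mem_compl.1 hu)).2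
  · intro u hu
    rw [(hPc u (mem_compl.1 hu)).1]
    exact ⟨hwi.1, hwi.2.trans_le (hw u (mem_compl.1 hu)).1⟩

end StarFamily

section Adversary

variable {n : ℕ} {L U : Fin n → ℝ} {P : Finset (Fin n)}

theorem exists_weight_queries_all_of_subset (hP : ∀ i ∈ P, L i = 0 ∧ U i = 2)
    (hPc : ∀ u ∉ P, L u = 1 ∧ U u = 3) (A : DetAlg n)
    (hfeas : ∀ w : Fin n → ℝ, (∀ v, w v ∈ Set.Ioo (L v) (U v)) →
      Feasible L U w (starFamily P) (A.seq w).toFinset)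
    (hPne : P.Nonempty) (hsub : P ⊆ (A.seq (baseWeight P)).toFinset) :
    ∃ w : Fin n → ℝ, (∀ v, w v ∈ Set.Ioo (L v) (U v)) ∧
      IsLeast {Q | Feasible L U w (starFamily P) Q} Pᶜ ∧ ∀ v, v ∈ A.seq w := by
  obtain ⟨i, hi, hsub'⟩ := A.exists_forall_subset_seq_update _ hPne hsub
  set w := update (baseWeight P) i 1.5
  have hw : ∀ v, w v ∈ Set.Ioo (L v) (U v) :=
    (forall_update_iff _ fun v x => x ∈ Set.Ioo (L v) (U v)).2
      ⟨by rw [(hP i hi).1, (hP i hi).2]; norm_num,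
        fun v _ => baseWeight_mem_Ioo hP hPc v⟩
  have hleast : IsLeast {Q | Feasible L U w (starFamily P) Q} Pᶜ := by
    refine isLeast_compl hP hPc (fun u hu => ?_) hi (by simp only [w, update_self]; norm_num)
    have hui : u ≠ i := (ne_of_mem_of_not_mem hi hu).symm
    simp only [w, update_of_ne hui, baseWeight, hu, if_false]
    norm_num
  refine ⟨w, hw, hleast, fun v => ?_⟩
  by_cases hv : v ∈ P
  · exact List.mem_toFinset.1 (hsub' 1.5 hv)
  · exact List.mem_toFinset.1 (hleast.2 (hfeas w hw) (mem_compl.2 hv))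

theorem exists_weight_queries_all_of_not_subset (hP : ∀ i ∈ P, L i = 0 ∧ U i = 2)
    (hPc : ∀ u ∉ P, L u = 1 ∧ U u = 3) (A : DetAlg n)
    (hfeas : ∀ w : Fin n → ℝ, (∀ v, w v ∈ Set.Ioo (L v) (U v)) →
      Feasible L U w (starFamily P) (A.seq w).toFinset)
    (hcard : P.card ≤ Pᶜ.card) (hnot : ¬ P ⊆ (A.seq (baseWeight P)).toFinset) :
    ∃ w : Fin n → ℝ, (∀ v, w v ∈ Set.Ioo (L v) (U v)) ∧
      optSize L U w (starFamily P) = P.card ∧ ∀ v, v ∈ A.seq w := by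
  obtain ⟨i, hi, hiQ⟩ := not_subset.1 hnot
  have hw₀ := baseWeight_mem_Ioo hP hPc
  have hcompl : Pᶜ ⊆ (A.seq (baseWeight P)).toFinset :=
    compl_subset_of_notMem hP hPc hw₀ hi hiQ (hfeas _ hw₀)
  have hne : Pᶜ.Nonempty := card_pos.1 ((card_pos.2 ⟨i, hi⟩).trans_le hcard)
  obtain ⟨r, hr, hcompl'⟩ := A.exists_forall_subset_seq_update _ hne hcompl
  have hrP := mem_compl.1 hr
  set w := update (baseWeight P) r 1.2
  have hw : ∀ v, w v ∈ Set.Ioo (L v) (U v) :=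
    (forall_update_iff _ fun v x => x ∈ Set.Ioo (L v) (U v)).2
      ⟨by rw [(hPc r hrP).1, (hPc r hrP).2]; norm_num, fun v _ => hw₀ v⟩
  have hall : ∀ v, v ∈ A.seq w := by
    intro v
    by_cases hv : v ∈ P
    · refine List.mem_toFinset.1 (mem_of_mem_compl_of_lt hP hPc hw (hcompl' 1.2 hr) hrP
        ?_ (hfeas w hw) hv)
      simp only [w, update_self]; norm_num
    · exact List.mem_toFinset.1 (hcompl' 1.2 (mem_compl.2 hv))
  refine ⟨w, hw, optSize_eq_card ?_ fun Q hQ => ?_, hall⟩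
  · refine feasible_starFamily_iff.2 fun j hj => solves_insert_of_forall_le fun u hu => ?_
    have hju : j ≠ r := ne_of_mem_of_not_mem hj hrP
    simp only [qhi, qlo, hj, mem_compl.1 hu, if_true, if_false, w, update_of_ne hju,
      baseWeight, (hPc u (mem_compl.1 hu)).1]
    norm_num
  · by_cases hPQ : P ⊆ Q
    · exact card_le_card hPQ
    · obtain ⟨j, hj, hjQ⟩ := not_subset.1 hPQ
      exact hcard.trans (card_le_card (compl_subset_of_notMem hP hPc hw hj hjQ hQ))

end Adversary

open scoped Classical in
/-- Lower bound w.r.t. the mandatory query distance: on the hard family of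
instances, any deterministic algorithm has competitive ratio at least
`a/(a-b)` on some realization with `k_M = 0`, or at least `a/b` on some
realization with arbitrary `k_M`. -/
theorem stmt15 (a b : ℕ) (hb : 0 < b) (hab : 2 * b ≤ a)
    (L U pw : Fin a → ℝ)
    (hleft : ∀ i : Fin a, (i : ℕ) < b → L i = 0 ∧ U i = 2 ∧ pw i = 1.5)
    (hright : ∀ i : Fin a, b ≤ (i : ℕ) → L i = 1 ∧ U i = 3 ∧ pw i = 2.5)
    (E : Finset (Finset (Fin a)))
    (hE : E = (Finset.univ.filter (fun i : Fin a => (i : ℕ) < b)).image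
        (fun i => insert i (Finset.univ.filter (fun j : Fin a => b ≤ (j : ℕ)))))
    (A : DetAlg a)
    (hfeas : ∀ w : Fin a → ℝ, (∀ i, w i ∈ Set.Ioo (L i) (U i)) →
      ∀ S ∈ E, Solves L U w (A.seq w).toFinset S) :
    (∃ w : Fin a → ℝ, (∀ i, w i ∈ Set.Ioo (L i) (U i)) ∧
        (symmDiff (Finset.univ.filter (Mandatory L U pw E))
                  (Finset.univ.filter (Mandatory L U w E))).card = 0 ∧
        ((a : ℝ) / ((a : ℝ) - (b : ℝ))) * (optSize L U w E : ℝ) ≤ ((A.seq w).length : ℝ)) ∨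
    (∃ w : Fin a → ℝ, (∀ i, w i ∈ Set.Ioo (L i) (U i)) ∧
        ((a : ℝ) / (b : ℝ)) * (optSize L U w E : ℝ) ≤ ((A.seq w).length : ℝ)) := by
  set P : Finset (Fin a) := univ.filter fun i : Fin a => (i : ℕ) < b with hPdef
  have hPcard : P.card = b := by rw [hPdef, Fin.card_filter_val_lt]; omega
  obtain rfl : E = starFamily P := by
    rw [hE, starFamily, hPdef]; congr! 2; ext; simp
  have hP : ∀ i ∈ P, L i = 0 ∧ U i = 2 ∧ pw i = 1.5 := fun i hi =>
    hleft i (by simpa [P] using hi)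
  have hPc : ∀ u ∉ P, L u = 1 ∧ U u = 3 ∧ pw u = 2.5 := fun u hu =>
    hright u (by simpa [P] using hu)
  have hLU : ∀ i ∈ P, L i = 0 ∧ U i = 2 := fun i hi => (hP i hi).imp_right And.left
  have hLUc : ∀ u ∉ P, L u = 1 ∧ U u = 3 := fun u hu => (hPc u hu).imp_right And.left
  by_cases hsub : P ⊆ (A.seq (baseWeight P)).toFinset
  · obtain ⟨i, hi⟩ : P.Nonempty := card_pos.1 (hPcard ▸ hb)
    obtain ⟨w, hw, hleast, hall⟩ :=
      exists_weight_queries_all_of_subset hLU hLUc A hfeas ⟨i, hi⟩ hsub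
    have hpw : IsLeast {Q | Feasible L U pw (starFamily P) Q} Pᶜ :=
      isLeast_compl hLU hLUc (fun u hu => by rw [(hPc u hu).2.2]; norm_num) hi
        (by rw [(hP i hi).2.2]; norm_num)
    refine Or.inl ⟨w, hw, by simp [hpw.filter_mandatory_eq, hleast.filter_mandatory_eq], ?_⟩
    rw [hleast.optSize_eq, card_compl, Fintype.card_fin, hPcard, Nat.cast_sub (by omega),
      div_mul_cancel₀ _ (sub_ne_zero.2 (by exact_mod_cast (by omega : a ≠ b)))]
    exact_mod_cast A.le_length_seq hall
  · have hcard : P.card ≤ Pᶜ.card := by rw [card_compl, Fintype.card_fin]; omega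
    obtain ⟨w, hw, hopt, hall⟩ :=
      exists_weight_queries_all_of_not_subset hLU hLUc A hfeas hcard hsub
    refine Or.inr ⟨w, hw, ?_⟩
    rw [hopt, hPcard, div_mul_cancel₀ _ (by positivity)]
    exact_mod_cast A.le_length_seq hall
end

section
/- Let X ⊆ V be a finite set of vertices each with an open interval, and suppose the hyperedges restricted to X have pairwise disjoint supports, with each hyperedge being a single witness pair {u_i, v_i} (intersecting intervals, one leftmost). Then for any error measure k ∈ {k_#, k_M, k_h} and any deterministic algorithm, its competitive ratio is at least min{1 + k/|OPT|, 2}: on an instance consisting of n disjoint copies of the pair gadget (I_v = (0,2) with ŵ_v = w_v = 1.5, I_u = (1,3) with ŵ_u = 1.5), for any deterministic strategy the adversary can force, on k of the copies, two queries against an optimum of one query with one prediction error per such copy. -/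
/-! The prediction `1.5` lies in both intervals, so each vertex's predicted weight is a witness
that the other one must be queried. The adversary keeps the weight of the vertex queried first at
its prediction, which still forces the other vertex, and moves the other vertex's weight out of
the first interval (to `2.5` or `0.5`), which makes the first query unnecessary. Exactly one weight
changes, one vertex stops being mandatory, and one interval endpoint is crossed. -/

open Finset

section Pair

variable {V : Type*} [DecidableEq V] {L U w : V → ℝ} {Q S : Finset V} {u v : V}

theorem mem_of_solves_pair (huv : u ≠ v) (hv : w v ∈ Set.Ioo (L v) (U v))
    (hvu : w v ∈ Set.Ioo (L u) (U u)) (hQ : Solves L U w Q {u, v}) : u ∈ Q := by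
  obtain ⟨hLv, hUv⟩ := hv
  obtain ⟨hLu, hUu⟩ := hvu
  obtain ⟨m, hm, h⟩ := hQ
  by_contra hu
  simp only [mem_insert, mem_singleton] at hm
  rcases hm with rfl | rfl
  · have h' := h v (by simp) huv.symm
    simp only [qhi, qlo, hu, if_false] at h'
    split_ifs at h' <;> linarith
  · have h' := h u (by simp) huv
    simp only [qhi, qlo, hu, if_false] at h'
    split_ifs at h' <;> linarith

theorem solves_pair_singleton (huv : u ≠ v) (hv : w v ∉ Set.Ioo (L u) (U u)) :
    Solves L U w {v} {u, v} := by
  rcases le_or_gt (w v) (L u) with hlo | hhi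
  · refine ⟨v, by simp, fun x hx hxv => ?_⟩
    obtain rfl : x = u := by simpa [hxv] using hx
    simpa [qhi, qlo, huv] using hlo
  · refine ⟨u, by simp, fun x hx hxu => ?_⟩
    obtain rfl : x = v := by simpa [hxu] using hx
    have : U u ≤ w x := by simpa [hhi] using hv
    simpa [qhi, qlo, huv] using this

theorem mandatory_singleton_iff :
    Mandatory L U w {S} v ↔ ∀ Q, Solves L U w Q S → v ∈ Q := by
  simp [Mandatory]

end Pair

theorem endpoint_between_of_mem_Ioo_of_notMem {a b p y : ℝ} (hp : p ∈ Set.Ioo a b)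
    (hy : y ∉ Set.Ioo a b) :
    (p ≤ a ∧ a < y) ∨ (y ≤ a ∧ a < p) ∨ (y < b ∧ b ≤ p) ∨ (p < b ∧ b ≤ y) := by
  obtain ⟨hpa, hpb⟩ := hp
  rcases le_or_gt y a with hya | hay
  · exact Or.inr <| Or.inl ⟨hya, hpa⟩
  · exact Or.inr <| Or.inr <| Or.inr ⟨hpb, by simpa [hay] using hy⟩

theorem Bool.univ_eq_pair_not (b : Bool) : (univ : Finset Bool) = {b, !b} := by
  cases b <;> decide

section Gadget

variable {L U pw w : Bool → ℝ} {f : Bool}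

theorem mandatory_of_forall_mem_Ioo (hpw : ∀ i j, pw i ∈ Set.Ioo (L j) (U j)) (i : Bool) :
    Mandatory L U pw {univ} i :=
  mandatory_singleton_iff.2 fun _ hQ =>
    mem_of_solves_pair (Bool.self_ne_not i) (hpw _ _) (hpw _ _)
      (Bool.univ_eq_pair_not i ▸ hQ)

theorem mem_of_solves_of_eq_prediction (hpw : ∀ i j, pw i ∈ Set.Ioo (L j) (U j))
    (hwf : w f = pw f) {Q : Finset Bool} (hQ : Solves L U w Q univ) : (!f) ∈ Q :=
  mem_of_solves_pair (Bool.not_ne_self f) (hwf ▸ hpw f f) (hwf ▸ hpw f !f)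
    (by rwa [pair_comm, ← Bool.univ_eq_pair_not])

theorem solves_not_singleton (hw : w (!f) ∉ Set.Ioo (L f) (U f)) :
    Solves L U w {!f} univ :=
  Bool.univ_eq_pair_not f ▸ solves_pair_singleton (Bool.self_ne_not f) hw

theorem mandatory_iff_eq_not (hpw : ∀ i j, pw i ∈ Set.Ioo (L j) (U j)) (hwf : w f = pw f)
    (hw : w (!f) ∉ Set.Ioo (L f) (U f)) {i : Bool} :
    Mandatory L U w {univ} i ↔ i = !f := by
  rw [mandatory_singleton_iff]
  refine ⟨fun h => mem_singleton.1 (h _ (solves_not_singleton hw)), ?_⟩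
  rintro rfl Q hQ
  exact mem_of_solves_of_eq_prediction hpw hwf hQ

theorem card_filter_ne_eq_one (hwf : w f = pw f) (hw : w (!f) ≠ pw (!f)) :
    (univ.filter fun i : Bool => w i ≠ pw i).card = 1 := by
  refine card_eq_one.2 ⟨!f, Finset.ext fun i => ?_⟩
  rcases Bool.eq_or_eq_not i f with rfl | rfl <;> simp [hwf, hw]

open scoped Classical in
theorem card_symmDiff_mandatory_eq_one (hpw : ∀ i j, pw i ∈ Set.Ioo (L j) (U j))
    (hwf : w f = pw f) (hw : w (!f) ∉ Set.Ioo (L f) (U f)) :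
    (symmDiff (univ.filter (Mandatory L U pw {univ}))
      (univ.filter (Mandatory L U w {univ}))).card = 1 := by
  rw [filter_true_of_mem fun i _ => mandatory_of_forall_mem_Ioo hpw i]
  refine card_eq_one.2 ⟨f, Finset.ext fun i => ?_⟩
  simp only [mem_symmDiff, mem_filter, mem_univ, true_and,
    mandatory_iff_eq_not hpw hwf hw, mem_singleton]
  rcases Bool.eq_or_eq_not i f with rfl | rfl <;> simp

open scoped Classical in
theorem sum_card_hops_eq_one (hpw : ∀ i j, pw i ∈ Set.Ioo (L j) (U j)) (hwf : w f = pw f)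
    (hw : w (!f) ∉ Set.Ioo (L f) (U f)) :
    (∑ v : Bool, (univ.filter (fun u : Bool => u ≠ v ∧
      ((pw v ≤ L u ∧ L u < w v) ∨ (w v ≤ L u ∧ L u < pw v) ∨
       (w v < U u ∧ U u ≤ pw v) ∨ (pw v < U u ∧ U u ≤ w v)))).card) = 1 := by
  rw [sum_eq_single (!f)]
  · refine card_eq_one.2 ⟨f, Finset.ext fun u => ?_⟩
    simp only [mem_filter, mem_univ, true_and, mem_singleton, Bool.ne_not]
    refine ⟨And.left, ?_⟩
    rintro rfl
    exact ⟨rfl, endpoint_between_of_mem_Ioo_of_notMem (hpw _ _) hw⟩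
  · intro v _ hv
    obtain rfl := Bool.ne_not.1 hv
    refine card_eq_zero.2 (filter_false_of_mem fun u _ h => ?_)
    rw [hwf] at h
    rcases h.2 with h | h | h | h <;> linarith [h.1, h.2]
  · simp

end Gadget

open scoped Classical in
/-- The two-interval gadget `I_v = (0,2)`, `I_u = (1,3)`, both predicted
weights `1.5` (`false` is `v`, `true` is `u`): whichever vertex a deterministic
algorithm queries first, the adversary can choose weights such that every
feasible query set containing the first-queried vertex must contain both
vertices, while the other vertex alone is feasible, and the resulting instance
has `k_# = k_M = k_h = 1`. -/
theorem stmt17 (L U pw : Bool → ℝ)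
    (hL : L false = 0 ∧ U false = 2 ∧ L true = 1 ∧ U true = 3)
    (hpw : ∀ i : Bool, pw i = 1.5) :
    ∀ f : Bool, ∃ w : Bool → ℝ,
      (∀ i : Bool, w i ∈ Set.Ioo (L i) (U i)) ∧
      w f = 1.5 ∧
      (∀ Q : Finset Bool, Solves L U w Q Finset.univ → f ∈ Q → Finset.univ ⊆ Q) ∧
      Solves L U w {!f} Finset.univ ∧
      (Finset.univ.filter fun i : Bool => w i ≠ pw i).card = 1 ∧
      (symmDiff (Finset.univ.filter (Mandatory L U pw {Finset.univ}))
                (Finset.univ.filter (Mandatory L U w {Finset.univ}))).card = 1 ∧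
      (∑ v : Bool, (Finset.univ.filter (fun u : Bool => u ≠ v ∧
        ((pw v ≤ L u ∧ L u < w v) ∨ (w v ≤ L u ∧ L u < pw v) ∨
         (w v < U u ∧ U u ≤ pw v) ∨ (pw v < U u ∧ U u ≤ w v)))).card) = 1 := by
  obtain ⟨hL0, hU0, hL1, hU1⟩ := hL
  intro f
  have hpwI : ∀ i j, pw i ∈ Set.Ioo (L j) (U j) := by
    intro i j
    cases j <;> norm_num [hpw, hL0, hU0, hL1, hU1]
  obtain ⟨x, hx, hxf⟩ : ∃ x, x ∈ Set.Ioo (L !f) (U !f) ∧ x ∉ Set.Ioo (L f) (U f) :=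
    ⟨if f then 0.5 else 2.5, by cases f <;> norm_num [hL0, hU0, hL1, hU1]⟩
  set w := Function.update pw (!f) x
  have hwf : w f = pw f := Function.update_of_ne (Bool.self_ne_not f) _ _
  have hwx : w (!f) = x := Function.update_self _ _ _
  have hw : w (!f) ∉ Set.Ioo (L f) (U f) := hwx ▸ hxf
  refine ⟨w, (Bool.forall_bool' f).2 ⟨hwf ▸ hpwI f f, hwx ▸ hx⟩,
    hwf.trans (hpw f), fun Q hQ hfQ i _ => ?_, solves_not_singleton hw,
    card_filter_ne_eq_one hwf fun h => hw (h ▸ hpwI _ _),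
    card_symmDiff_mandatory_eq_one hpwI hwf hw, sum_card_hops_eq_one hpwI hwf hw⟩
  rcases Bool.eq_or_eq_not i f with rfl | rfl
  exacts [hfQ, mem_of_solves_of_eq_prediction hpwI hwf hQ]
end
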